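/- If there is a resolution refutation of length n from a set S of propositional clauses, then there is a minimal unsatisfiable subset T' of S such that any two distinct clauses of T' are joined by an alternating path in T' of length at most 2n − 2. -/

import Mathlib

/-!
The input clauses occurring in a refutation of length `n` form an unsatisfiable set of at most `n`
clauses, so they contain a minimal unsatisfiable set `T'` with `|T'| ≤ n`. By completeness of
resolution `T'` has a refutation, and by minimality this refutation uses every clause of `T'`.
Along a derivation, the input clauses used are linked by alternating paths: any two of them, and
any input clause and an occurrence of a literal of the derived clause, are joined by an alternating
path that avoids those literals at its ends, and a resolution step upon `L` glues paths of its two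
premises through the link `L`, `L.compl`. Finally, a shortest alternating path between distinct
clauses visits its end clauses once and every other clause at most twice (three visits to one
clause allow a shortcut), so it has at most `2|T'| - 2 ≤ 2n - 2` clauses.
-/

/-- A propositional literal: an atom together with a Boolean sign. -/
abbrev Lit (α : Type) := α × Bool

/-- A propositional clause: a finite set of literals. -/
abbrev Clause (α : Type) := Finset (α × Bool)

/-- The complement of a literal flips its sign. -/
def Lit.compl {α : Type} (L : Lit α) : Lit α := (L.1, !L.2)

/-- A valuation satisfies a literal `(a, s)` iff `v a = s`. -/
def SatLit {α : Type} (v : α → Bool) (L : Lit α) : Prop := v L.1 = L.2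

/-- A valuation satisfies a clause iff it satisfies some literal of it. -/
def SatClause {α : Type} (v : α → Bool) (C : Clause α) : Prop := ∃ L ∈ C, SatLit v L

/-- A valuation satisfies a set of clauses iff it satisfies every clause in it. -/
def SatSet {α : Type} (v : α → Bool) (S : Set (Clause α)) : Prop := ∀ C ∈ S, SatClause v C

/-- A set of clauses is satisfiable if some valuation satisfies it. -/
def Satisfiable {α : Type} (S : Set (Clause α)) : Prop := ∃ v, SatSet v S

/-- `IsAltPath S Cs ps` : the sequence of clauses `Cs` together with the list of
linking literal pairs `ps` is an alternating path in `S`.  The path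
`C₁,(L₁,M₂),C₂,…,(Lₙ₋₁,Mₙ),Cₙ` is encoded with `Cs = [C₁,…,Cₙ]` and
`ps = [(L₁,M₂),…,(Lₙ₋₁,Mₙ)]`. -/
def IsAltPath {α : Type} [DecidableEq α] (S : Set (Clause α))
    (Cs : List (Clause α)) (ps : List (Lit α × Lit α)) : Prop :=
  Cs ≠ [] ∧ ps.length + 1 = Cs.length ∧
  (∀ C ∈ Cs, C ∈ S) ∧
  (∀ i, ∀ h : i < ps.length,
    (ps.get ⟨i, h⟩).1 ∈ Cs.getD i ∅ ∧
    (ps.get ⟨i, h⟩).2 ∈ Cs.getD (i + 1) ∅ ∧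
    (ps.get ⟨i, h⟩).2 = Lit.compl (ps.get ⟨i, h⟩).1) ∧
  (∀ i, ∀ h : i + 1 < ps.length,
    (ps.get ⟨i + 1, h⟩).1 ≠ (ps.get ⟨i, Nat.lt_of_succ_lt h⟩).2)

/-- There is an alternating path in `S` from `C` to `D` of length `n`
(length counts the clauses). -/
def AltPathFromTo {α : Type} [DecidableEq α] (S : Set (Clause α))
    (C D : Clause α) (n : ℕ) : Prop :=
  ∃ Cs ps, IsAltPath S Cs ps ∧ Cs.head? = some C ∧ Cs.getLast? = some D ∧ Cs.length = n

/-- The relevance distance `d_S(C, D)`: the minimum length of an alternating path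
in `S` from `C` to `D`, or `∞` if there is none. -/
noncomputable def relDist {α : Type} [DecidableEq α] (S : Set (Clause α))
    (C D : Clause α) : ℕ∞ :=
  ⨅ n ∈ {n : ℕ | AltPathFromTo S C D n}, (n : ℕ∞)

/-- `d_S(T, C) = min {d_S(D, C) : D ∈ T}`. -/
noncomputable def relDistFrom {α : Type} [DecidableEq α] (S T : Set (Clause α))
    (C : Clause α) : ℕ∞ :=
  ⨅ D ∈ T, relDist S D C

/-- `R_{n,S}(T) = {C ∈ S : d_S(T, C) ≤ n}`. -/
def RelSet {α : Type} [DecidableEq α] (n : ℕ) (S T : Set (Clause α)) : Set (Clause α) :=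
  {C ∈ S | relDistFrom S T C ≤ (n : ℕ∞)}

/-- A set of clauses is relevance connected if between any two of its clauses
there is an alternating path in it. -/
def RelevanceConnected {α : Type} [DecidableEq α] (S : Set (Clause α)) : Prop :=
  ∀ C ∈ S, ∀ D ∈ S, ∃ n, AltPathFromTo S C D n

/-- A set of clauses is minimal unsatisfiable if it is unsatisfiable and every
proper subset of it is satisfiable. -/
def MinimalUnsat {α : Type} (S : Set (Clause α)) : Prop :=
  ¬ Satisfiable S ∧ ∀ T ⊂ S, Satisfiable T

/-- `S'` is a support set for `S`: `S' ⊆ S` and every unsatisfiable subset of `S`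
meets `S'`. -/
def IsSupport {α : Type} (S S' : Set (Clause α)) : Prop :=
  S' ⊆ S ∧ ∀ T ⊆ S, ¬ Satisfiable T → (T ∩ S').Nonempty

/-- `D` is a resolvent of `C₁` and `C₂` upon literal `L`. -/
def IsResolvent {α : Type} [DecidableEq α] (D C₁ C₂ : Clause α) (L : Lit α) : Prop :=
  L ∈ C₁ ∧ Lit.compl L ∈ C₂ ∧ D = (C₁.erase L) ∪ (C₂.erase (Lit.compl L))

/-- `Cs` is a resolution sequence from `S`: every clause is an input clause
(member of `S`) or a resolvent of two earlier clauses. -/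
def IsResolutionSeq {α : Type} [DecidableEq α] (S : Set (Clause α))
    (Cs : List (Clause α)) : Prop :=
  ∀ i, ∀ h : i < Cs.length,
    Cs.get ⟨i, h⟩ ∈ S ∨
    ∃ j k L, j < i ∧ k < i ∧ IsResolvent (Cs.get ⟨i, h⟩) (Cs.getD j ∅) (Cs.getD k ∅) L

/-- `Cs` is a resolution refutation of length `n` from `S`: a resolution sequence
of `n` clauses ending in the empty clause. -/
def IsRefutation {α : Type} [DecidableEq α] (S : Set (Clause α))
    (Cs : List (Clause α)) (n : ℕ) : Prop :=
  IsResolutionSeq S Cs ∧ Cs.length = n ∧ Cs.getLast? = some (∅ : Clause α)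

section Semantics

variable {α : Type}

@[simp] theorem Lit.compl_compl (L : Lit α) : L.compl.compl = L := by
  simp [Lit.compl]

theorem SatLit.not_compl {v : α → Bool} {L : Lit α} (h : SatLit v L) : ¬ SatLit v L.compl := by
  simp_all [SatLit, Lit.compl]

theorem not_satClause_empty (v : α → Bool) : ¬ SatClause v (∅ : Clause α) := by
  simp [SatClause]

theorem IsResolvent.satClause [DecidableEq α] {v : α → Bool} {D C₁ C₂ : Clause α} {L : Lit α}
    (h : IsResolvent D C₁ C₂ L) (h₁ : SatClause v C₁) (h₂ : SatClause v C₂) : SatClause v D := by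
  obtain ⟨-, -, rfl⟩ := h
  obtain ⟨M₁, hM₁, hv₁⟩ := h₁
  obtain ⟨M₂, hM₂, hv₂⟩ := h₂
  by_cases hL : M₁ = L
  · have : M₂ ≠ L.compl := by rintro rfl; exact (hL ▸ hv₁).not_compl hv₂
    exact ⟨M₂, by simp [*]⟩
  · exact ⟨M₁, by simp [*]⟩

end Semantics

inductive Derivable {α : Type} [DecidableEq α] (T : Set (Clause α)) : Clause α → Prop
  | input {C : Clause α} : C ∈ T → Derivable T C
  | resolve {D C₁ C₂ : Clause α} {L : Lit α} :
      Derivable T C₁ → Derivable T C₂ → IsResolvent D C₁ C₂ L → Derivable T D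

namespace Derivable

variable {α : Type} [DecidableEq α] {T T' : Set (Clause α)} {C : Clause α}

theorem mono (h : Derivable T C) (hT : T ⊆ T') : Derivable T' C := by
  induction h with
  | input hC => exact input (hT hC)
  | resolve _ _ hres ih₁ ih₂ => exact resolve ih₁ ih₂ hres

theorem satClause (h : Derivable T C) {v : α → Bool} (hv : SatSet v T) : SatClause v C := by
  induction h with
  | input hC => exact hv _ hC
  | resolve _ _ hres ih₁ ih₂ => exact hres.satClause ih₁ ih₂

theorem not_satisfiable (h : Derivable T ∅) : ¬ Satisfiable T :=
  fun ⟨v, hv⟩ => not_satClause_empty v (h.satClause hv)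

theorem exists_input_mem (h : Derivable T C) {L : Lit α} (hL : L ∈ C) : ∃ C₀ ∈ T, L ∈ C₀ := by
  induction h with
  | input hC => exact ⟨_, hC, hL⟩
  | resolve _ _ hres ih₁ ih₂ =>
    obtain ⟨-, -, rfl⟩ := hres
    rcases Finset.mem_union.1 hL with hL | hL
    · exact ih₁ (Finset.mem_of_mem_erase hL)
    · exact ih₂ (Finset.mem_of_mem_erase hL)

end Derivable

theorem IsResolutionSeq.derivable {α : Type} [DecidableEq α] {S : Set (Clause α)}
    {Cs : List (Clause α)} (h : IsResolutionSeq S Cs) {C : Clause α} (hC : C ∈ Cs) :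
    Derivable {C ∈ S | C ∈ Cs} C := by
  suffices ∀ i (hi : i < Cs.length), Derivable {C ∈ S | C ∈ Cs} Cs[i] by
    obtain ⟨i, hi, rfl⟩ := List.getElem_of_mem hC
    exact this i hi
  intro i
  induction i using Nat.strong_induction_on with
  | _ i ih =>
    intro hi
    rcases h i hi with hS | ⟨j, k, L, hj, hk, hres⟩
    · exact .input ⟨hS, List.getElem_mem hi⟩
    · rw [List.getD_eq_getElem _ _ (hj.trans hi), List.getD_eq_getElem _ _ (hk.trans hi)] at hres
      exact .resolve (ih j hj _) (ih k hk _) hres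

theorem IsRefutation.not_satisfiable {α : Type} [DecidableEq α] {S : Set (Clause α)}
    {Cs : List (Clause α)} {n : ℕ} (h : IsRefutation S Cs n) : ¬ Satisfiable {C ∈ S | C ∈ Cs} :=
  (h.1.derivable (List.mem_of_getLast? h.2.2)).not_satisfiable

theorem exists_minimalUnsat_subset {α : Type} {T : Set (Clause α)} (hT : T.Finite)
    (h : ¬ Satisfiable T) : ∃ U ⊆ T, MinimalUnsat U := by
  have hfin : {U | U ⊆ T ∧ ¬ Satisfiable U}.Finite := hT.finite_subsets.subset fun _ hU => hU.1
  obtain ⟨U, ⟨hUT, hU⟩, hmin⟩ := hfin.exists_minimal ⟨T, subset_rfl, h⟩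
  refine ⟨U, hUT, hU, fun V hVU => ?_⟩
  by_contra hV
  exact hVU.not_subset (hmin ⟨hVU.subset.trans hUT, hV⟩ hVU.subset)

section Completeness

variable {α : Type} [DecidableEq α]

def atoms (T : Finset (Clause α)) : Finset α := T.biUnion (·.image Prod.fst)

theorem fst_mem_atoms {T : Finset (Clause α)} {C : Clause α} {L : Lit α} (hC : C ∈ T)
    (hL : L ∈ C) : L.1 ∈ atoms T :=
  Finset.mem_biUnion.2 ⟨C, hC, Finset.mem_image_of_mem _ hL⟩

/-- `T` under the partial assignment `a := b`: clauses containing `(a, b)` are satisfied and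
dropped, and the false literal `(a, !b)` is erased from the others. -/
def restrict (T : Finset (Clause α)) (a : α) (b : Bool) : Finset (Clause α) :=
  (T.filter fun C => (a, b) ∉ C).image (·.erase (a, !b))

theorem fst_ne_of_mem_restrict {T : Finset (Clause α)} {a : α} {b : Bool} {C : Clause α}
    (hC : C ∈ restrict T a b) {L : Lit α} (hL : L ∈ C) : L.1 ≠ a := by
  obtain ⟨C₀, hC₀, rfl⟩ := Finset.mem_image.1 hC
  obtain ⟨hne, hL₀⟩ := Finset.mem_erase.1 hL
  rintro rfl
  cases Bool.eq_or_eq_not L.2 b with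
  | inl h => exact (Finset.mem_filter.1 hC₀).2 (by rwa [← h])
  | inr h => exact hne (by rw [← h])

theorem card_atoms_restrict_lt {T : Finset (Clause α)} {a : α} (ha : a ∈ atoms T) (b : Bool) :
    (atoms (restrict T a b)).card < (atoms T).card := by
  refine (Finset.card_le_card fun x hx => ?_).trans_lt (Finset.card_erase_lt_of_mem ha)
  obtain ⟨C, hC, hx⟩ := Finset.mem_biUnion.1 hx
  obtain ⟨L, hL, rfl⟩ := Finset.mem_image.1 hx
  obtain ⟨C₀, hC₀, rfl⟩ := Finset.mem_image.1 hC
  exact Finset.mem_erase.2 ⟨fst_ne_of_mem_restrict hC hL,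
    fst_mem_atoms (Finset.mem_filter.1 hC₀).1 (Finset.mem_of_mem_erase hL)⟩

theorem not_satisfiable_restrict {T : Finset (Clause α)}
    (hT : ¬ Satisfiable (T : Set (Clause α))) (a : α) (b : Bool) :
    ¬ Satisfiable (restrict T a b : Set (Clause α)) := by
  rintro ⟨v, hv⟩
  refine hT ⟨Function.update v a b, fun C hC => ?_⟩
  by_cases hab : (a, b) ∈ C
  · exact ⟨(a, b), hab, by simp [SatLit]⟩
  have hC' : C.erase (a, !b) ∈ restrict T a b :=
    Finset.mem_image_of_mem _ (Finset.mem_filter.2 ⟨hC, hab⟩)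
  obtain ⟨L, hL, hvL⟩ := hv _ hC'
  exact ⟨L, Finset.mem_of_mem_erase hL, by
    simpa [SatLit, Function.update_of_ne (fst_ne_of_mem_restrict hC' hL)] using hvL⟩

theorem Derivable.lift_restrict {T : Finset (Clause α)} {a : α} {b : Bool} {E : Clause α}
    (h : Derivable (restrict T a b : Set (Clause α)) E) :
    ∃ E', Derivable (T : Set (Clause α)) E' ∧ E ⊆ E' ∧ E' ⊆ insert (a, !b) E := by
  induction h with
  | @input C hC =>
    obtain ⟨C₀, hC₀, rfl⟩ := Finset.mem_image.1 hC
    exact ⟨C₀, .input (Finset.mem_filter.1 hC₀).1, Finset.erase_subset _ _,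
      Finset.insert_erase_subset _ _⟩
  | @resolve D C₁ C₂ L h₁ h₂ hres ih₁ ih₂ =>
    obtain ⟨E₁, hE₁, hCE₁, hE₁C⟩ := ih₁
    obtain ⟨E₂, hE₂, hCE₂, hE₂C⟩ := ih₂
    obtain ⟨hL₁, hL₂, rfl⟩ := hres
    have hLa : L.1 ≠ a := by
      obtain ⟨C₀, hC₀, hLC₀⟩ := h₁.exists_input_mem hL₁
      exact fst_ne_of_mem_restrict hC₀ hLC₀
    refine ⟨E₁.erase L ∪ E₂.erase L.compl,
      .resolve hE₁ hE₂ ⟨hCE₁ hL₁, hCE₂ hL₂, rfl⟩, ?_, fun M hM => ?_⟩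
    · exact Finset.union_subset_union (Finset.erase_subset_erase _ hCE₁)
        (Finset.erase_subset_erase _ hCE₂)
    · have h₁ := @hE₁C M
      have h₂ := @hE₂C M
      simp only [Finset.mem_union, Finset.mem_erase, Finset.mem_insert] at hM h₁ h₂ ⊢
      grind

theorem derivable_empty_of_not_satisfiable (T : Finset (Clause α))
    (hT : ¬ Satisfiable (T : Set (Clause α))) : Derivable (T : Set (Clause α)) ∅ := by
  by_cases hatoms : (atoms T).Nonempty
  · obtain ⟨a, ha⟩ := hatoms
    have hsplit (b : Bool) : ∃ E, Derivable (T : Set (Clause α)) E ∧ E ⊆ {(a, !b)} := by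
      have := card_atoms_restrict_lt ha b
      obtain ⟨E, hE, -, hsub⟩ :=
        (derivable_empty_of_not_satisfiable _ (not_satisfiable_restrict hT a b)).lift_restrict
      exact ⟨E, hE, by simpa using hsub⟩
    obtain ⟨E₁, h₁, hs₁⟩ := hsplit true
    obtain ⟨E₂, h₂, hs₂⟩ := hsplit false
    rcases Finset.subset_singleton_iff.1 hs₁ with rfl | rfl
    · exact h₁
    rcases Finset.subset_singleton_iff.1 hs₂ with rfl | rfl
    · exact h₂
    exact .resolve h₁ h₂
      ⟨Finset.mem_singleton_self _, by simp [Lit.compl], by simp [Lit.compl]⟩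
  · have hempty : ∅ ∈ T := by
      by_contra hnot
      refine hT ⟨fun _ => true, fun C hC => ?_⟩
      obtain ⟨L, hL⟩ := Finset.nonempty_iff_ne_empty.2 (ne_of_mem_of_not_mem hC hnot)
      exact absurd ⟨_, fst_mem_atoms hC hL⟩ hatoms
    exact .input hempty
termination_by (atoms T).card

end Completeness

section AltPath

variable {α : Type}

/-- The alternation condition at the clause where a path with links `p` is continued by a path
with links `q`: the continuation does not leave through the literal the clause was entered by. -/
def Alternates (p q : List (Lit α × Lit α)) : Prop :=
  ∀ a ∈ p.getLast?, ∀ b ∈ q.head?, b.1 ≠ a.2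

theorem alternates_append_right_iff {p q r : List (Lit α × Lit α)} (hq : q ≠ []) :
    Alternates p (q ++ r) ↔ Alternates p q := by
  simp [Alternates, List.head?_append_of_ne_nil _ hq]

variable [DecidableEq α] {S : Set (Clause α)}

theorem IsAltPath.mono {S' : Set (Clause α)} {Cs : List (Clause α)}
    {ps : List (Lit α × Lit α)} (h : IsAltPath S Cs ps) (hS : S ⊆ S') : IsAltPath S' Cs ps :=
  ⟨h.1, h.2.1, fun C hC => hS (h.2.2.1 C hC), h.2.2.2⟩

theorem isAltPath_cons_nil_iff {C : Clause α} {Cs : List (Clause α)} :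
    IsAltPath S (C :: Cs) [] ↔ C ∈ S ∧ Cs = [] := by
  constructor
  · rintro ⟨-, hlen, hmem, -⟩
    have hCs : Cs = [] := List.eq_nil_of_length_eq_zero (by simpa using hlen.symm)
    exact ⟨hmem C (by simp), hCs⟩
  · rintro ⟨hC, rfl⟩
    exact ⟨by simp, rfl, by simpa using hC, by simp, by simp⟩

theorem isAltPath_cons_cons_iff {C : Clause α} {Cs : List (Clause α)} {x : Lit α × Lit α}
    {ps : List (Lit α × Lit α)} :
    IsAltPath S (C :: Cs) (x :: ps) ↔ C ∈ S ∧ x.1 ∈ C ∧ x.2 ∈ Cs.getD 0 ∅ ∧ x.2 = x.1.compl ∧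
      (∀ y ∈ ps.head?, y.1 ≠ x.2) ∧ IsAltPath S Cs ps := by
  constructor
  · rintro ⟨-, hlen, hmem, hlink, halt⟩
    have hCs : Cs ≠ [] := by rintro rfl; simp at hlen
    obtain ⟨h₁, h₂, h₃⟩ := hlink 0 (by simp)
    refine ⟨hmem C (by simp), h₁, h₂, h₃, ?_, hCs, by simpa using hlen,
      fun D hD => hmem D (by simp [hD]), fun i hi => hlink (i + 1) (by simpa using hi),
      fun i hi => halt (i + 1) (by simpa using hi)⟩
    rintro y hy
    obtain ⟨ps', rfl⟩ := List.head?_eq_some_iff.1 hy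
    exact halt 0 (by simp)
  · rintro ⟨hC, h₁, h₂, h₃, hhead, hCs, hlen, hmem, hlink, halt⟩
    refine ⟨by simp, by simpa using hlen, List.forall_mem_cons.2 ⟨hC, hmem⟩, ?_, ?_⟩
    · rintro (_ | i) hi
      · exact ⟨h₁, h₂, h₃⟩
      · exact hlink i (by simpa using hi)
    · rintro (_ | i) hi
      · obtain ⟨y, ps', rfl⟩ := List.exists_cons_of_length_pos (by simp at hi; omega)
        exact hhead y rfl
      · exact halt i (by simpa using hi)

theorem not_isAltPath_nil {ps : List (Lit α × Lit α)} : ¬ IsAltPath S [] ps :=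
  fun h => h.1 rfl

theorem isAltPath_singleton_iff {C : Clause α} {ps : List (Lit α × Lit α)} :
    IsAltPath S [C] ps ↔ C ∈ S ∧ ps = [] := by
  cases ps with
  | nil => simp [isAltPath_cons_nil_iff]
  | cons x ps => simp [isAltPath_cons_cons_iff, not_isAltPath_nil]

theorem isAltPath_append_cons_iff {A B : List (Clause α)} {E : Clause α}
    {r : List (Lit α × Lit α)} :
    IsAltPath S (A ++ E :: B) r ↔ ∃ p q, r = p ++ q ∧ IsAltPath S (A ++ [E]) p ∧
      IsAltPath S (E :: B) q ∧ Alternates p q := by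
  induction A generalizing r with
  | nil =>
    simp only [List.nil_append, isAltPath_singleton_iff]
    constructor
    · intro h
      exact ⟨[], r, rfl, ⟨h.2.2.1 E (by simp), rfl⟩, h, by simp [Alternates]⟩
    · rintro ⟨p, q, rfl, ⟨-, rfl⟩, hq, -⟩
      simpa using hq
  | cons C A ih =>
    have hget : (A ++ E :: B).getD 0 ∅ = (A ++ [E]).getD 0 ∅ := by cases A <;> rfl
    simp only [List.cons_append]
    constructor
    · intro h
      rcases r with _ | ⟨x, r⟩
      · simp [isAltPath_cons_nil_iff] at h
      obtain ⟨hC, h₁, h₂, h₃, hhead, hr⟩ := isAltPath_cons_cons_iff.1 h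
      obtain ⟨p, q, rfl, hp, hq, hpq⟩ := ih.1 hr
      refine ⟨x :: p, q, rfl, isAltPath_cons_cons_iff.2 ⟨hC, h₁, hget ▸ h₂, h₃, ?_, hp⟩, hq, ?_⟩
      · rcases p with _ | ⟨y, p⟩
        · simp
        · simpa using hhead
      · rcases p with _ | ⟨y, p⟩
        · simpa [Alternates] using hhead
        · simpa [Alternates] using hpq
    · rintro ⟨_ | ⟨x, p⟩, q, rfl, hp, hq, hpq⟩
      · simp [isAltPath_cons_nil_iff] at hp
      obtain ⟨hC, h₁, h₂, h₃, hhead, hp⟩ := isAltPath_cons_cons_iff.1 hp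
      refine isAltPath_cons_cons_iff.2
        ⟨hC, h₁, hget ▸ h₂, h₃, ?_, ih.2 ⟨p, q, rfl, hp, hq, ?_⟩⟩
      · rcases p with _ | ⟨y, p⟩
        · simpa [Alternates] using hpq
        · simpa using hhead
      · rcases p with _ | ⟨y, p⟩
        · simp [Alternates]
        · simpa [Alternates] using hpq

theorem IsAltPath.links_ne_nil {C D : Clause α} {Cs : List (Clause α)}
    {ps : List (Lit α × Lit α)} (h : IsAltPath S (C :: (Cs ++ [D])) ps) : ps ≠ [] := by
  rintro rfl
  simp [isAltPath_cons_nil_iff] at h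

end AltPath

section Connectivity

variable {α : Type}

/-- Possible ends of the alternating paths tracked along a derivation of `K` from `Z`, each paired
with the literals the path may not use at that end: `inl E` is the input clause `E`, unrestricted,
and `inr L` is an input clause containing `L`, which the path may not enter or leave through `L`. -/
def portEnds (Z : Set (Clause α)) : Clause α ⊕ Lit α → Set (Clause α × Set (Lit α))
  | .inl E => {(E, ∅)}
  | .inr L => {a | a.1 ∈ Z ∧ L ∈ a.1 ∧ a.2 = {L}}

theorem portEnds_mono {Z Z' : Set (Clause α)} (hZ : Z ⊆ Z') (p : Clause α ⊕ Lit α) :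
    portEnds Z p ⊆ portEnds Z' p := by
  rcases p with E | L
  · exact subset_rfl
  · exact fun a ha => ⟨hZ ha.1, ha.2⟩

theorem notMem_of_mem_portEnds {Z : Set (Clause α)} {p : Clause α ⊕ Lit α}
    {a : Clause α × Set (Lit α)} {L : Lit α} (ha : a ∈ portEnds Z p) (hp : p ≠ .inr L) :
    L ∉ a.2 := by
  rcases p with E | M
  · simp_all [portEnds]
  · obtain ⟨-, -, h⟩ := ha
    simp_all [eq_comm]

def ports (Z : Set (Clause α)) (K : Clause α) : Set (Clause α ⊕ Lit α) :=
  {p | p.elim (· ∈ Z) (· ∈ K)}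

variable [DecidableEq α] {Z : Set (Clause α)}

/-- An alternating path in `Z` from `E` to `F` which does not leave `E` through a literal of `X`
and does not enter `F` through a literal of `Y` (vacuous for the path of length 1). -/
def AltPathAvoid (Z : Set (Clause α)) (E : Clause α) (X : Set (Lit α)) (F : Clause α)
    (Y : Set (Lit α)) : Prop :=
  ∃ Cs ps, IsAltPath Z Cs ps ∧ Cs.head? = some E ∧ Cs.getLast? = some F ∧
    (∀ a ∈ ps.head?, a.1 ∉ X) ∧ (∀ a ∈ ps.getLast?, a.2 ∉ Y)

namespace AltPathAvoid

variable {E F : Clause α} {X Y : Set (Lit α)}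

theorem refl (hE : E ∈ Z) : AltPathAvoid Z E X E Y :=
  ⟨[E], [], isAltPath_singleton_iff.2 ⟨hE, rfl⟩, rfl, rfl, by simp, by simp⟩

theorem mono {Z' : Set (Clause α)} (h : AltPathAvoid Z E X F Y) (hZ : Z ⊆ Z') :
    AltPathAvoid Z' E X F Y :=
  let ⟨Cs, ps, hp, hE, hF, hX, hY⟩ := h
  ⟨Cs, ps, hp.mono hZ, hE, hF, hX, hY⟩

theorem glue {F' E' : Clause α} {K : Lit α} (h₁ : AltPathAvoid Z E X F {K})
    (h₂ : AltPathAvoid Z F' {K.compl} E' Y) (hK : K ∈ F) (hK' : K.compl ∈ F') (hKX : K ∉ X)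
    (hKY : K.compl ∉ Y) : AltPathAvoid Z E X E' Y := by
  obtain ⟨Cs₁, p₁, h₁, hE, hF, hX, hK₁⟩ := h₁
  obtain ⟨Cs₂, p₂, h₂, hF', hE', hK₂, hY⟩ := h₂
  obtain ⟨A, rfl⟩ := List.getLast?_eq_some_iff.1 hF
  obtain ⟨B, rfl⟩ := List.head?_eq_some_iff.1 hF'
  have hlink : IsAltPath Z [F, F'] [(K, K.compl)] :=
    isAltPath_cons_cons_iff.2 ⟨h₁.2.2.1 F (by simp), hK, hK', rfl, by simp,
      isAltPath_singleton_iff.2 ⟨h₂.2.2.1 F' (by simp), rfl⟩⟩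
  have h₁₂ : IsAltPath Z ((A ++ [F]) ++ [F']) (p₁ ++ [(K, K.compl)]) := by
    simpa using isAltPath_append_cons_iff.2 ⟨p₁, _, rfl, h₁, hlink, by
      rintro a ha _ ⟨⟩ h
      exact hK₁ a ha h.symm⟩
  refine ⟨_, _, isAltPath_append_cons_iff.2 ⟨_, p₂, rfl, h₁₂, h₂, ?_⟩, ?_, ?_, ?_, ?_⟩
  · simp only [Alternates, List.getLast?_append, List.getLast?_singleton, Option.some_or]
    rintro _ ⟨⟩ b hb h
    exact hK₂ b hb (by simp [h])
  · simpa [List.head?_append] using hE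
  · simpa [List.getLast?_append] using hE'
  · rcases p₁ with _ | ⟨a, p₁⟩
    · simpa using hKX
    · simpa using hX
  · rcases eq_or_ne p₂ [] with rfl | hp₂
    · simpa using hKY
    · rwa [List.getLast?_append_of_ne_nil _ hp₂]

end AltPathAvoid

def PortConnected (Z : Set (Clause α)) (K : Clause α) : Prop :=
  ∀ p ∈ ports Z K, ∀ q ∈ ports Z K,
    ∃ a ∈ portEnds Z p, ∃ b ∈ portEnds Z q, AltPathAvoid Z a.1 a.2 b.1 b.2

theorem portConnected_singleton (K : Clause α) : PortConnected {K} K := by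
  have hK : ∀ p ∈ ports {K} K, ∃ X, (K, X) ∈ portEnds {K} p := by
    rintro (E | L) hp
    · exact ⟨∅, by simpa [ports, portEnds, eq_comm] using hp⟩
    · exact ⟨{L}, rfl, hp, rfl⟩
  intro p hp q hq
  obtain ⟨X, hX⟩ := hK p hp
  obtain ⟨Y, hY⟩ := hK q hq
  exact ⟨_, hX, _, hY, .refl rfl⟩

theorem mem_ports_resolvent {Z₁ Z₂ : Set (Clause α)} {D C₁ C₂ : Clause α} {L : Lit α}
    (hres : IsResolvent D C₁ C₂ L) {p : Clause α ⊕ Lit α} (hp : p ∈ ports (Z₁ ∪ Z₂) D) :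
    (p ∈ ports Z₁ C₁ ∧ p ≠ .inr L) ∨ (p ∈ ports Z₂ C₂ ∧ p ≠ .inr L.compl) := by
  obtain ⟨-, -, rfl⟩ := hres
  rcases p with E | M <;> simp [ports] at hp ⊢ <;> tauto

/-- Ports on the two sides of a resolution step upon `L` are joined through the link
`L`, `L.compl`. -/
theorem PortConnected.cross {Z₁ Z₂ : Set (Clause α)} {C₁ C₂ : Clause α} {L : Lit α}
    (h₁ : PortConnected Z₁ C₁) (h₂ : PortConnected Z₂ C₂) (hL₁ : L ∈ C₁) (hL₂ : L.compl ∈ C₂)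
    (hZ₁ : Z₁ ⊆ Z) (hZ₂ : Z₂ ⊆ Z) {p q : Clause α ⊕ Lit α} (hp : p ∈ ports Z₁ C₁)
    (hpL : p ≠ .inr L) (hq : q ∈ ports Z₂ C₂) (hqL : q ≠ .inr L.compl) :
    ∃ a ∈ portEnds Z p, ∃ b ∈ portEnds Z q, AltPathAvoid Z a.1 a.2 b.1 b.2 := by
  obtain ⟨a, ha, ⟨F, _⟩, ⟨-, hLF, rfl⟩, haF⟩ := h₁ p hp (.inr L) hL₁
  obtain ⟨⟨F', _⟩, ⟨-, hLF', rfl⟩, b, hb, hF'b⟩ := h₂ (.inr L.compl) hL₂ q hq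
  exact ⟨a, portEnds_mono hZ₁ p ha, b, portEnds_mono hZ₂ q hb, (haF.mono hZ₁).glue
    (hF'b.mono hZ₂) hLF hLF' (notMem_of_mem_portEnds ha hpL) (notMem_of_mem_portEnds hb hqL)⟩

theorem PortConnected.resolvent {Z₁ Z₂ : Set (Clause α)} {D C₁ C₂ : Clause α} {L : Lit α}
    (h₁ : PortConnected Z₁ C₁) (h₂ : PortConnected Z₂ C₂) (hres : IsResolvent D C₁ C₂ L) :
    PortConnected (Z₁ ∪ Z₂) D := by
  have hZ₁ : Z₁ ⊆ Z₁ ∪ Z₂ := Set.subset_union_left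
  have hZ₂ : Z₂ ⊆ Z₁ ∪ Z₂ := Set.subset_union_right
  have hL₂ : L.compl.compl ∈ C₁ := by simpa using hres.1
  intro p hp q hq
  rcases mem_ports_resolvent hres hp with ⟨hp, hpL⟩ | ⟨hp, hpL⟩ <;>
    rcases mem_ports_resolvent hres hq with ⟨hq, hqL⟩ | ⟨hq, hqL⟩
  · obtain ⟨a, ha, b, hb, hab⟩ := h₁ p hp q hq
    exact ⟨a, portEnds_mono hZ₁ p ha, b, portEnds_mono hZ₁ q hb, hab.mono hZ₁⟩
  · exact h₁.cross h₂ hres.1 hres.2.1 hZ₁ hZ₂ hp hpL hq hqL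
  · exact h₂.cross h₁ hres.2.1 hL₂ hZ₂ hZ₁ hp hpL hq (by simpa using hqL)
  · obtain ⟨a, ha, b, hb, hab⟩ := h₂ p hp q hq
    exact ⟨a, portEnds_mono hZ₂ p ha, b, portEnds_mono hZ₂ q hb, hab.mono hZ₂⟩

theorem Derivable.exists_portConnected {T : Set (Clause α)} {K : Clause α}
    (h : Derivable T K) : ∃ Z ⊆ T, Derivable Z K ∧ PortConnected Z K := by
  induction h with
  | @input C hC => exact ⟨{C}, by simpa using hC, .input rfl, portConnected_singleton C⟩
  | resolve _ _ hres ih₁ ih₂ =>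
    obtain ⟨Z₁, hZ₁T, hd₁, hc₁⟩ := ih₁
    obtain ⟨Z₂, hZ₂T, hd₂, hc₂⟩ := ih₂
    exact ⟨Z₁ ∪ Z₂, Set.union_subset hZ₁T hZ₂T, .resolve (hd₁.mono Set.subset_union_left)
      (hd₂.mono Set.subset_union_right) hres, hc₁.resolvent hc₂ hres⟩

theorem MinimalUnsat.relevanceConnected {T : Set (Clause α)} (hfin : T.Finite)
    (hT : MinimalUnsat T) : RelevanceConnected T := by
  have hder : Derivable T ∅ := by
    simpa using derivable_empty_of_not_satisfiable hfin.toFinset (by simpa using hT.1)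
  obtain ⟨Z, hZT, hZ, hconn⟩ := hder.exists_portConnected
  obtain rfl : Z = T := by
    by_contra hne
    exact hZ.not_satisfiable (hT.2 Z (hZT.ssubset_of_ne hne))
  intro C hC D hD
  obtain ⟨_, rfl, _, rfl, Cs, ps, hpath, hCs, hDs, -⟩ := hconn (.inl C) hC (.inl D) hD
  exact ⟨Cs.length, Cs, ps, hpath, hCs, hDs, rfl⟩

end Connectivity

theorem List.exists_eq_append_cons_of_lt_count {β : Type} [DecidableEq β] {a : β} :
    ∀ {l : List β} {k : ℕ}, k < l.count a → ∃ s t, l = s ++ a :: t ∧ k ≤ t.count a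
  | b :: l, k, h => by
    by_cases hb : b = a
    · subst hb
      exact ⟨[], l, rfl, by simpa using h⟩
    · obtain ⟨s, t, rfl, ht⟩ := exists_eq_append_cons_of_lt_count (by simpa [hb] using h)
      exact ⟨b :: s, t, rfl, ht⟩

theorem List.length_le_two_mul_card_sub_two {β : Type} [DecidableEq β] {l : List β}
    {s : Finset β} (hl : ∀ x ∈ l, x ∈ s) {a b : β} (ha : a ∈ s) (hb : b ∈ s) (hab : a ≠ b)
    (hca : l.count a ≤ 1) (hcb : l.count b ≤ 1) (hc : ∀ x, l.count x ≤ 2) :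
    l.length ≤ 2 * s.card - 2 := by
  have hb' : b ∈ s.erase a := Finset.mem_erase.2 ⟨hab.symm, hb⟩
  have hsum : ∑ x ∈ s, l.count x = l.length := by
    simpa using Multiset.sum_count_eq_card (m := (l : Multiset β)) hl
  rw [← Finset.add_sum_erase s _ ha, ← Finset.add_sum_erase _ _ hb'] at hsum
  have hrest := Finset.sum_le_card_nsmul ((s.erase a).erase b) (l.count ·) 2 (fun x _ => hc x)
  rw [Finset.card_erase_of_mem hb', Finset.card_erase_of_mem ha, smul_eq_mul] at hrest
  have hcard : 2 ≤ s.card := Finset.one_lt_card.2 ⟨a, ha, b, hb, hab⟩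
  have : s.card - 1 - 1 = s.card - 2 := by omega
  omega

section Shortening

variable {α : Type} [DecidableEq α] {S : Set (Clause α)}

/-- Of three visits to the same clause, two can be short-cut: the visit in the middle cannot
leave through both the literal entering the first visit and the one entering itself. -/
theorem IsAltPath.shortcut {A B₁ B₂ B₃ : List (Clause α)} {E : Clause α}
    {r : List (Lit α × Lit α)} (h : IsAltPath S (A ++ E :: (B₁ ++ E :: (B₂ ++ E :: B₃))) r) :
    (∃ r', IsAltPath S (A ++ E :: (B₂ ++ E :: B₃)) r') ∨ (∃ r', IsAltPath S (A ++ E :: B₃) r') ∨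
      ∃ r', IsAltPath S (A ++ E :: (B₁ ++ E :: B₃)) r' := by
  obtain ⟨p₀, q₀, -, h₀, hq₀, j₀⟩ := isAltPath_append_cons_iff.1 h
  obtain ⟨p₁, q₁, rfl, h₁, hq₁, j₁⟩ :=
    (isAltPath_append_cons_iff (A := E :: B₁)).1 (by simpa using hq₀)
  obtain ⟨p₂, p₃, rfl, h₂, h₃, j₂⟩ :=
    (isAltPath_append_cons_iff (A := E :: B₂)).1 (by simpa using hq₁)
  have hp₁ := h₁.links_ne_nil
  have hp₂ := h₂.links_ne_nil
  rw [alternates_append_right_iff hp₁] at j₀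
  rw [alternates_append_right_iff hp₂] at j₁
  by_cases c₁ : Alternates p₀ p₂
  · exact .inl ⟨_, isAltPath_append_cons_iff.2 ⟨p₀, _, rfl, h₀, hq₁,
      (alternates_append_right_iff hp₂).2 c₁⟩⟩
  by_cases c₂ : Alternates p₀ p₃
  · exact .inr (.inl ⟨_, isAltPath_append_cons_iff.2 ⟨p₀, p₃, rfl, h₀, h₃, c₂⟩⟩)
  have c₃ : Alternates p₁ p₃ := by
    simp only [Alternates, not_forall, not_not] at c₁ c₂ j₁ ⊢
    obtain ⟨a₀, ha₀, b₂, hb₂, e₁⟩ := c₁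
    obtain ⟨a₀', ha₀', b₃, hb₃, e₂⟩ := c₂
    intro a₁ ha₁ b₃' hb₃' e₃
    cases Option.mem_unique ha₀ ha₀'
    cases Option.mem_unique hb₃ hb₃'
    exact j₁ a₁ ha₁ b₂ hb₂ (by rw [e₁, ← e₂, e₃])
  have h₁₃ := isAltPath_append_cons_iff.2 ⟨p₁, p₃, rfl, h₁, h₃, c₃⟩
  exact .inr (.inr ⟨_, isAltPath_append_cons_iff.2 ⟨p₀, _, rfl, h₀, by simpa using h₁₃,
    (alternates_append_right_iff hp₁).2 j₀⟩⟩)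

theorem IsAltPath.exists_shorter {Cs : List (Clause α)} {ps : List (Lit α × Lit α)}
    (h : IsAltPath S Cs ps) {C D : Clause α} (hC : Cs.head? = some C)
    (hD : Cs.getLast? = some D) (hcount : 1 < Cs.count C ∨ 1 < Cs.count D ∨ ∃ E, 2 < Cs.count E) :
    ∃ m < Cs.length, AltPathFromTo S C D m := by
  rcases hcount with hc | hc | ⟨E, hc⟩
  · obtain ⟨A, T, rfl, hT⟩ := List.exists_eq_append_cons_of_lt_count hc
    obtain ⟨B₁, B₂, rfl, -⟩ := List.exists_eq_append_cons_of_lt_count hT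
    obtain ⟨-, q, -, -, hq, -⟩ :=
      (isAltPath_append_cons_iff (A := A ++ C :: B₁)).1 (by simpa using h)
    refine ⟨_, ?_, _, q, hq, rfl, ?_, rfl⟩
    · simp only [List.length_append, List.length_cons]
      omega
    · simpa only [← List.cons_append, ← List.append_assoc, List.getLast?_append_cons] using hD
  · obtain ⟨A, T, rfl, hT⟩ := List.exists_eq_append_cons_of_lt_count hc
    obtain ⟨B₁, B₂, rfl, -⟩ := List.exists_eq_append_cons_of_lt_count hT
    obtain ⟨p, -, -, hp, -⟩ := isAltPath_append_cons_iff.1 h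
    refine ⟨_, ?_, _, p, hp, by simpa [List.head?_append] using hC, by simp, rfl⟩
    simp
  · obtain ⟨A, T₁, rfl, hT₁⟩ := List.exists_eq_append_cons_of_lt_count hc
    obtain ⟨B₁, T₂, rfl, hT₂⟩ := List.exists_eq_append_cons_of_lt_count hT₁
    obtain ⟨B₂, B₃, rfl, -⟩ := List.exists_eq_append_cons_of_lt_count hT₂
    rcases h.shortcut with ⟨r, hr⟩ | ⟨r, hr⟩ | ⟨r, hr⟩ <;> refine ⟨_, ?_, _, r, hr, ?_, ?_, rfl⟩
    all_goals first
      | (rw [← hC]; cases A <;> rfl)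
      | simpa only [← List.cons_append, ← List.append_assoc, List.getLast?_append_cons] using hD
      | simp only [List.length_append, List.length_cons]; omega

/-- In a shortest alternating path between distinct clauses, the end clauses occur once and every
other clause at most twice. -/
theorem AltPathFromTo.exists_le_two_mul_ncard_sub_two {Z : Set (Clause α)} (hZ : Z.Finite)
    {C D : Clause α} (hCD : C ≠ D) {k : ℕ} (h : AltPathFromTo Z C D k) :
    ∃ m ≤ 2 * Z.ncard - 2, AltPathFromTo Z C D m := by
  induction k using Nat.strong_induction_on with
  | _ k ih =>
    obtain ⟨Cs, ps, hp, hC, hD, rfl⟩ := h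
    by_cases hcount : 1 < Cs.count C ∨ 1 < Cs.count D ∨ ∃ E, 2 < Cs.count E
    · obtain ⟨m, hm, h'⟩ := hp.exists_shorter hC hD hcount
      exact ih m hm h'
    push Not at hcount
    have hmem : ∀ E ∈ Cs, E ∈ hZ.toFinset := fun E hE => hZ.mem_toFinset.2 (hp.2.2.1 E hE)
    refine ⟨Cs.length, ?_, Cs, ps, hp, hC, hD, rfl⟩
    rw [Set.ncard_eq_toFinset_card Z hZ]
    exact List.length_le_two_mul_card_sub_two hmem (hmem C (List.mem_of_head? hC))
      (hmem D (List.mem_of_getLast? hD)) hCD hcount.1 hcount.2.1 hcount.2.2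

end Shortening

/-- If there is a resolution refutation of length `n` from `S`, then `S` has a
minimal unsatisfiable subset `T'` in which any two distinct clauses are joined by
an alternating path of length at most `2n − 2`. -/
theorem stmt_4 {α : Type} [DecidableEq α] (S : Set (Clause α)) (n : ℕ)
    (Cs : List (Clause α)) (h : IsRefutation S Cs n) :
    ∃ T' ⊆ S, MinimalUnsat T' ∧
      ∀ C ∈ T', ∀ D ∈ T', C ≠ D → ∃ m ≤ 2 * n - 2, AltPathFromTo T' C D m := by
  have hfin : {C ∈ S | C ∈ Cs}.Finite := Cs.finite_toSet.subset fun _ hC => hC.2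
  obtain ⟨T, hTS, hT⟩ := exists_minimalUnsat_subset hfin h.not_satisfiable
  have hTfin : T.Finite := hfin.subset hTS
  have hcard : T.ncard ≤ n := calc
    T.ncard ≤ (Cs.toFinset : Set (Clause α)).ncard :=
      Set.ncard_le_ncard (fun C hC => by simpa using (hTS hC).2) (Finset.finite_toSet _)
    _ ≤ n := by rw [Set.ncard_coe_finset, ← h.2.1]; exact Cs.toFinset_card_le
  refine ⟨T, fun C hC => (hTS hC).1, hT, fun C hC D hD hCD => ?_⟩
  obtain ⟨k, hk⟩ := hT.relevanceConnected hTfin C hC D hD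
  obtain ⟨m, hm, hpath⟩ := hk.exists_le_two_mul_ncard_sub_two hTfin hCD
  exact ⟨m, hm.trans (by omega), hpath⟩
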